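/- arXiv:2011.13217 — 6 statements merged into one kernel-verified Lean document; each statement's English description precedes it below -/
import Mathlib

section
/- Let H = (V,E) be a finite s-uniform hypergraph such that every subset Ẽ ⊆ E of edges satisfies |⋃_{e∈Ẽ} e| ≥ (s-1)|Ẽ|. Then one can choose for each edge e ∈ E a subset f(e) ⊆ e with |f(e)| = s-1 such that the sets f(e), e ∈ E, are pairwise disjoint. -/
/-- Hall-type selection: if every subset `E'` of the edges of a finite `s`-uniform
hypergraph spans at least `(s-1)|E'|` vertices, then each edge `e` can be assigned
an `(s-1)`-subset `f e ⊆ e` so that the chosen subsets are pairwise disjoint. -/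
theorem stmt3 {α : Type*} [DecidableEq α] (s : ℕ)
    (E : Finset (Finset α))
    (hs : ∀ e ∈ E, e.card = s)
    (hall : ∀ E' ⊆ E, (s - 1) * E'.card ≤ (E'.biUnion id).card) :
    ∃ f : Finset α → Finset α,
      (∀ e ∈ E, f e ⊆ e ∧ (f e).card = s - 1) ∧
      ∀ e ∈ E, ∀ e' ∈ E, e ≠ e' → Disjoint (f e) (f e') := by
  classical
  -- index type: each edge with multiplicity s-1
  set ι := {e // e ∈ E} × Fin (s - 1) with hι
  set t : ι → Finset α := fun p => (p.1 : Finset α) with ht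
  have hHall : ∀ S : Finset ι, S.card ≤ (S.biUnion t).card := by
    intro S
    set E' : Finset (Finset α) := S.image (fun p => (p.1 : Finset α)) with hE'
    have hsub : E' ⊆ E := by
      intro e he
      simp only [hE', Finset.mem_image] at he
      obtain ⟨p, _, rfl⟩ := he
      exact p.1.2
    have hbu : S.biUnion t = E'.biUnion id := by
      rw [hE', Finset.image_biUnion]
      rfl
    have h1 : S.card ≤ (s - 1) * E'.card := by
      have hsub2 : S ⊆ (S.image Prod.fst) ×ˢ (Finset.univ : Finset (Fin (s - 1))) := by
        intro p hp
        rw [Finset.mem_product]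
        exact ⟨Finset.mem_image_of_mem _ hp, Finset.mem_univ _⟩
      have hc1 : S.card ≤ (S.image Prod.fst).card * (s - 1) := by
        calc S.card ≤ ((S.image Prod.fst) ×ˢ (Finset.univ : Finset (Fin (s - 1)))).card :=
              Finset.card_le_card hsub2
          _ = (S.image Prod.fst).card * (s - 1) := by
              rw [Finset.card_product, Finset.card_univ, Fintype.card_fin]
      have hc2 : (S.image Prod.fst).card = E'.card := by
        have himg : Finset.image (fun p : ι => (p.1 : Finset α)) S
            = Finset.image Subtype.val (Finset.image Prod.fst S) := by
          rw [Finset.image_image]; rfl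
        rw [hE', himg, Finset.card_image_of_injective _ Subtype.val_injective]
      rw [hc2, mul_comm] at hc1
      exact hc1
    calc S.card ≤ (s - 1) * E'.card := h1
      _ ≤ (E'.biUnion id).card := hall E' hsub
      _ = (S.biUnion t).card := by rw [hbu]
  obtain ⟨g, hginj, hgmem⟩ :=
    (Finset.all_card_le_biUnion_card_iff_existsInjective' t).mp hHall
  refine ⟨fun e => if h : e ∈ E then
      Finset.image (fun i : Fin (s - 1) => g (⟨e, h⟩, i)) Finset.univ else ∅, ?_, ?_⟩
  · intro e he
    simp only [dif_pos he]
    constructor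
    · intro x hx
      simp only [Finset.mem_image] at hx
      obtain ⟨i, _, rfl⟩ := hx
      exact hgmem (⟨e, he⟩, i)
    · rw [Finset.card_image_of_injective _ (fun i j hij => by
        have := hginj hij
        exact (Prod.mk.injEq _ _ _ _ ▸ this).2)]
      simp
  · intro e he e' he' hne
    simp only [dif_pos he, dif_pos he']
    rw [Finset.disjoint_left]
    intro x hx hx'
    simp only [Finset.mem_image] at hx hx'
    obtain ⟨i, _, hi⟩ := hx
    obtain ⟨j, _, hj⟩ := hx'
    have := hginj (hi.trans hj.symm)
    apply hne
    exact congrArg (fun p => (p.1 : Finset α)) this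
end

section
/- Let H = (V,E) be an s-uniform hypergraph each of whose connected components has excess at most 0 (e.g. a disjoint collection of trees and unicycles). Then there exists an (s-1)-uniform hypergraph H' on V whose edges are pairwise disjoint and such that every edge of H contains some edge of H'. -/
/-- Two vertices lie in a common edge of `E`. -/
def SameEdge {α : Type*} (E : Finset (Finset α)) (x y : α) : Prop :=
  ∃ e ∈ E, x ∈ e ∧ y ∈ e

/-- `x` and `y` are connected by a chain of pairwise intersecting edges. -/
def Conn {α : Type*} (E : Finset (Finset α)) : α → α → Prop :=
  Relation.ReflTransGen (SameEdge E)

open scoped Classical in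
/-- The connected component of `x` inside the vertex set `Vs`. -/
noncomputable def component {α : Type*} (Vs : Finset α) (E : Finset (Finset α))
    (x : α) : Finset α :=
  Vs.filter fun y => Conn E x y

open scoped Classical in
/-- The edges belonging to the connected component of `x`. -/
noncomputable def compEdges {α : Type*} (Vs : Finset α) (E : Finset (Finset α))
    (x : α) : Finset (Finset α) :=
  E.filter fun e => e ⊆ component Vs E x

/-- The excess `ex(H) = (s-1)|E| - |V|` of an `s`-uniform hypergraph. -/
def excess {α : Type*} (s : ℕ) (Vs : Finset α) (E : Finset (Finset α)) : ℤ :=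
  ((s : ℤ) - 1) * E.card - Vs.card

section Aux

open Finset

variable {α : Type*} [DecidableEq α]

lemma conn_of_mem_edge {E : Finset (Finset α)} {x u w : α} {e : Finset α}
    (hc : Conn E x u) (he : e ∈ E) (hu : u ∈ e) (hw : w ∈ e) : Conn E x w :=
  Relation.ReflTransGen.tail hc ⟨e, he, hu, hw⟩

lemma edge_subset_component {Vs : Finset α} {E : Finset (Finset α)} {x u : α} {e : Finset α}
    (hE : ∀ e ∈ E, e ⊆ Vs) (he : e ∈ E) (hu : u ∈ e) (hc : Conn E x u) :
    e ⊆ component Vs E x := by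
  classical
  intro w hw
  simp only [component, mem_filter]
  exact ⟨hE e he hw, conn_of_mem_edge hc he hu hw⟩

lemma mem_component_iff {Vs : Finset α} {E : Finset (Finset α)} {x v : α} :
    v ∈ component Vs E x ↔ v ∈ Vs ∧ Conn E x v := by
  classical
  simp [component]

lemma mem_compEdges_iff {Vs : Finset α} {E : Finset (Finset α)} {x : α} {e : Finset α} :
    e ∈ compEdges Vs E x ↔ e ∈ E ∧ e ⊆ component Vs E x := by
  classical
  simp [compEdges]

lemma component_subset_biUnion {Vs : Finset α} {E : Finset (Finset α)} {x : α} {e : Finset α}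
    (hE : ∀ e ∈ E, e ⊆ Vs) (he : e ∈ E) (hx : x ∈ e) :
    component Vs E x ⊆ (compEdges Vs E x).biUnion id := by
  intro v hv
  have hconn : Conn E x v := (mem_component_iff.mp hv).2
  rcases Relation.ReflTransGen.cases_tail hconn with rfl | ⟨u, hxu, hsame⟩
  · refine mem_biUnion.mpr ⟨e, ?_, hx⟩
    exact mem_compEdges_iff.mpr ⟨he, edge_subset_component hE he hx Relation.ReflTransGen.refl⟩
  · obtain ⟨e', he', hu, hv'⟩ := hsame
    refine mem_biUnion.mpr ⟨e', ?_, hv'⟩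
    exact mem_compEdges_iff.mpr ⟨he', edge_subset_component hE he' hu hxu⟩

/-- Connectivity expansion: if `F` is a proper subfamily of the component edges
containing an edge through `x`, some edge outside `F` meets `⋃ F`. -/
lemma exists_expand {Vs : Finset α} {E : Finset (Finset α)} {x : α} {s : ℕ} (hs : 1 ≤ s)
    (hE : ∀ e ∈ E, e ⊆ Vs) (hcard : ∀ e ∈ E, e.card = s)
    {F : Finset (Finset α)} (hF : F ⊆ compEdges Vs E x) (hx : x ∈ F.biUnion id)
    (hne : (compEdges Vs E x \ F).Nonempty) :
    ∃ g ∈ compEdges Vs E x, g ∉ F ∧ (g ∩ F.biUnion id).Nonempty := by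
  obtain ⟨g0, hg0⟩ := hne
  have hg0c : g0 ∈ compEdges Vs E x := (mem_sdiff.mp hg0).1
  have hg0F : g0 ∉ F := (mem_sdiff.mp hg0).2
  obtain ⟨hg0E, hg0sub⟩ := mem_compEdges_iff.mp hg0c
  obtain ⟨v, hv⟩ : g0.Nonempty := card_pos.mp (by rw [hcard g0 hg0E]; omega)
  have hconn : Conn E x v := (mem_component_iff.mp (hg0sub hv)).2
  have key : ∀ w : α, Conn E x w → w ∈ F.biUnion id ∨
      ∃ g ∈ compEdges Vs E x, g ∉ F ∧ (g ∩ F.biUnion id).Nonempty := by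
    intro w hw
    induction hw with
    | refl => exact Or.inl hx
    | @tail b c hxb hbc ih =>
      rcases ih with hb | hgoal
      · obtain ⟨e', he', hbe, hce⟩ := hbc
        have he'c : e' ∈ compEdges Vs E x :=
          mem_compEdges_iff.mpr ⟨he', edge_subset_component hE he' hbe hxb⟩
        by_cases hF' : e' ∈ F
        · exact Or.inl (mem_biUnion.mpr ⟨e', hF', hce⟩)
        · exact Or.inr ⟨e', he'c, hF', ⟨b, mem_inter.mpr ⟨hbe, hb⟩⟩⟩
      · exact Or.inr hgoal
  rcases key v hconn with hvF | h
  · exact ⟨g0, hg0c, hg0F, ⟨v, mem_inter.mpr ⟨hv, hvF⟩⟩⟩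
  · exact h

/-- Excess monotonicity within one component. -/
lemma comp_bound {Vs : Finset α} {E : Finset (Finset α)} {x : α} {s : ℕ} (hs : 1 ≤ s)
    (hE : ∀ e ∈ E, e ⊆ Vs) (hcard : ∀ e ∈ E, e.card = s)
    {e : Finset α} (he : e ∈ E) (hx : x ∈ e)
    (htop : (s - 1) * (compEdges Vs E x).card ≤ ((compEdges Vs E x).biUnion id).card) :
    ∀ F : Finset (Finset α), e ∈ F → F ⊆ compEdges Vs E x →
      (s - 1) * F.card ≤ (F.biUnion id).card := by
  suffices h : ∀ n (F : Finset (Finset α)), (compEdges Vs E x \ F).card = n →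
      e ∈ F → F ⊆ compEdges Vs E x → (s - 1) * F.card ≤ (F.biUnion id).card by
    intro F heF hFsub
    exact h _ F rfl heF hFsub
  intro n
  induction n using Nat.strong_induction_on with
  | _ n ih =>
    intro F hn heF hFsub
    rcases eq_or_ne n 0 with rfl | hne
    · have : compEdges Vs E x ⊆ F := by
        intro g hg
        by_contra hgF
        have : g ∈ compEdges Vs E x \ F := mem_sdiff.mpr ⟨hg, hgF⟩
        have := card_pos.mpr ⟨g, this⟩
        omega
      have hFeq : F = compEdges Vs E x := Subset.antisymm hFsub this
      rw [hFeq]; exact htop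
    · have hsdne : (compEdges Vs E x \ F).Nonempty := by
        rw [← card_pos, hn]; omega
      have hxB : x ∈ F.biUnion id := mem_biUnion.mpr ⟨e, heF, hx⟩
      obtain ⟨g, hgc, hgF, hgint⟩ := exists_expand hs hE hcard hFsub hxB hsdne
      set B := F.biUnion id with hB
      set F' := insert g F with hF'
      have hF'sub : F' ⊆ compEdges Vs E x := by
        intro a ha
        rcases mem_insert.mp ha with rfl | ha
        · exact hgc
        · exact hFsub ha
      have hcardF' : F'.card = F.card + 1 := card_insert_of_notMem hgF
      have hsd' : (compEdges Vs E x \ F').card = n - 1 := by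
        have : compEdges Vs E x \ F' = (compEdges Vs E x \ F).erase g := by
          rw [hF']; ext a
          simp only [mem_sdiff, mem_insert, mem_erase]
          tauto
        rw [this, card_erase_of_mem (mem_sdiff.mpr ⟨hgc, hgF⟩), hn]
      have hih := ih (n - 1) (by omega) F' hsd' (mem_insert_of_mem heF) hF'sub
      have hBunion : F'.biUnion id = g ∪ B := by
        rw [hF', biUnion_insert]; rfl
      have hcardg : g.card = s := hcard g (mem_compEdges_iff.mp hgc).1
      have hlt : (g \ B).card < g.card := by
        obtain ⟨a, ha⟩ := hgint
        have hag : a ∈ g := (mem_inter.mp ha).1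
        have haB : a ∈ B := (mem_inter.mp ha).2
        refine card_lt_card ⟨sdiff_subset, ?_⟩
        intro hsub
        exact (mem_sdiff.mp (hsub hag)).2 haB
      have hunion : (g ∪ B).card ≤ B.card + (s - 1) := by
        have h1 : (g ∪ B).card ≤ (g \ B).card + B.card := by
          rw [← sdiff_union_self_eq_union]
          exact card_union_le _ _
        omega
      rw [hBunion] at hih
      rw [hcardF', Nat.mul_succ] at hih
      omega

/-- The component of a non-isolated vertex is covered by its edges. -/
lemma comp_top {Vs : Finset α} {E : Finset (Finset α)} {x : α} {s : ℕ} (hs : 1 ≤ s)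
    (hE : ∀ e ∈ E, e ⊆ Vs) {e : Finset α} (he : e ∈ E) (hx : x ∈ e)
    (hcomp : excess s (component Vs E x) (compEdges Vs E x) ≤ 0) :
    (s - 1) * (compEdges Vs E x).card ≤ ((compEdges Vs E x).biUnion id).card := by
  have hsub1 : (compEdges Vs E x).biUnion id ⊆ component Vs E x := by
    intro v hv
    obtain ⟨e', he', hv'⟩ := mem_biUnion.mp hv
    exact (mem_compEdges_iff.mp he').2 hv'
  have hsub2 := component_subset_biUnion hE he hx
  have heq : (compEdges Vs E x).biUnion id = component Vs E x :=
    Subset.antisymm hsub1 hsub2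
  rw [heq]
  unfold excess at hcomp
  have hz : ((s : ℤ) - 1) * (compEdges Vs E x).card ≤ (component Vs E x).card := by omega
  have hcast : ((s : ℤ) - 1) = ((s - 1 : ℕ) : ℤ) := by omega
  rw [hcast, ← Nat.cast_mul] at hz
  exact_mod_cast hz

/-- The Hall condition for the whole hypergraph. -/
lemma hall_cond {Vs : Finset α} {E : Finset (Finset α)} {s : ℕ} (hs : 1 ≤ s)
    (hE : ∀ e ∈ E, e ⊆ Vs ∧ e.card = s)
    (hcomp : ∀ x ∈ Vs, excess s (component Vs E x) (compEdges Vs E x) ≤ 0) :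
    ∀ F : Finset (Finset α), F ⊆ E → (s - 1) * F.card ≤ (F.biUnion id).card := by
  have hE1 : ∀ e ∈ E, e ⊆ Vs := fun e he => (hE e he).1
  have hE2 : ∀ e ∈ E, e.card = s := fun e he => (hE e he).2
  suffices h : ∀ n (F : Finset (Finset α)), F.card = n → F ⊆ E →
      (s - 1) * F.card ≤ (F.biUnion id).card by
    intro F hF; exact h F.card F rfl hF
  intro n
  induction n using Nat.strong_induction_on with
  | _ n ih =>
    intro F hn hFE
    rcases F.eq_empty_or_nonempty with rfl | ⟨e, he⟩
    · simp
    · have heE : e ∈ E := hFE he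
      obtain ⟨x, hx⟩ : e.Nonempty := card_pos.mp (by rw [hE2 e heE]; omega)
      have hxV : x ∈ Vs := hE1 e heE hx
      classical
      set C := component Vs E x with hC
      set Fx := F.filter (fun f => f ⊆ C) with hFx
      have heFx : e ∈ Fx := by
        refine mem_filter.mpr ⟨he, ?_⟩
        exact edge_subset_component hE1 heE hx Relation.ReflTransGen.refl
      have hFxsub : Fx ⊆ compEdges Vs E x := by
        intro f hf
        have := mem_filter.mp hf
        exact mem_compEdges_iff.mpr ⟨hFE this.1, this.2⟩
      -- bound on Fx
      have b1 : (s - 1) * Fx.card ≤ (Fx.biUnion id).card :=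
        comp_bound hs hE1 hE2 heE hx
          (comp_top hs hE1 heE hx (hcomp x hxV)) Fx heFx hFxsub
      -- bound on the rest
      have hlt : (F \ Fx).card < n := by
        rw [← hn]
        refine card_lt_card ⟨sdiff_subset, ?_⟩
        intro hsub
        exact (mem_sdiff.mp (hsub he)).2 heFx
      have b2 : (s - 1) * (F \ Fx).card ≤ ((F \ Fx).biUnion id).card :=
        ih _ hlt _ rfl (fun f hf => hFE (mem_sdiff.mp hf).1)
      have hFeq : Fx ∪ (F \ Fx) = F := union_sdiff_of_subset (filter_subset _ _)
      have hBU : F.biUnion id = Fx.biUnion id ∪ (F \ Fx).biUnion id := by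
        ext a
        simp only [mem_biUnion, mem_union]
        constructor
        · rintro ⟨b, hb, hab⟩
          by_cases hbFx : b ∈ Fx
          · exact Or.inl ⟨b, hbFx, hab⟩
          · exact Or.inr ⟨b, mem_sdiff.mpr ⟨hb, hbFx⟩, hab⟩
        · rintro (⟨b, hb, hab⟩ | ⟨b, hb, hab⟩)
          · exact ⟨b, (filter_subset _ _) hb, hab⟩
          · exact ⟨b, (mem_sdiff.mp hb).1, hab⟩
      have hdisj : Disjoint (Fx.biUnion id) ((F \ Fx).biUnion id) := by
        rw [disjoint_left]
        intro a ha1 ha2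
        obtain ⟨f, hf, haf⟩ := mem_biUnion.mp ha1
        obtain ⟨g, hg, hag⟩ := mem_biUnion.mp ha2
        have haC : a ∈ C := (mem_filter.mp hf).2 haf
        have hgF := mem_sdiff.mp hg
        have hconn : Conn E x a := (mem_component_iff.mp haC).2
        have : g ⊆ C := edge_subset_component hE1 (hFE hgF.1) hag hconn
        exact hgF.2 (mem_filter.mpr ⟨hgF.1, this⟩)
      have hcards : Fx.card + (F \ Fx).card = F.card := by
        have := card_sdiff_add_card_eq_card (show Fx ⊆ F from filter_subset _ _)
        omega
      have hcardBU : (F.biUnion id).card = (Fx.biUnion id).card + ((F \ Fx).biUnion id).card := by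
        rw [hBU, card_union_of_disjoint hdisj]
      calc (s - 1) * F.card = (s - 1) * Fx.card + (s - 1) * (F \ Fx).card := by
            rw [← hcards, Nat.mul_add]
        _ ≤ (Fx.biUnion id).card + ((F \ Fx).biUnion id).card := Nat.add_le_add b1 b2
        _ = (F.biUnion id).card := hcardBU.symm

end Aux

/-- If each connected component of the `s`-uniform hypergraph `H = (Vs, E)` has
excess at most `0` (e.g. `H` is a disjoint collection of trees and unicycles),
then there is an `(s-1)`-uniform hypergraph `E'` on `Vs` with pairwise disjoint
edges such that every edge of `H` contains an edge of `E'` (i.e. `H' ≤ H`). -/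
theorem stmt4 {α : Type*} [DecidableEq α] (s : ℕ) (hs : 1 ≤ s)
    (Vs : Finset α) (E : Finset (Finset α))
    (hE : ∀ e ∈ E, e ⊆ Vs ∧ e.card = s)
    (hcomp : ∀ x ∈ Vs, excess s (component Vs E x) (compEdges Vs E x) ≤ 0) :
    ∃ E' : Finset (Finset α),
      (∀ f ∈ E', f ⊆ Vs ∧ f.card = s - 1) ∧
      (∀ f ∈ E', ∀ g ∈ E', f ≠ g → Disjoint f g) ∧
      ∀ e ∈ E, ∃ f ∈ E', f ⊆ e := by
  classical
  open Finset in
  have hhall := hall_cond hs hE hcomp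
  set t : {e // e ∈ E} × Fin (s - 1) → Finset α := fun p => p.1.1 with ht
  have hHallCond : ∀ S : Finset ({e // e ∈ E} × Fin (s - 1)), S.card ≤ (S.biUnion t).card := by
    intro S
    set F : Finset (Finset α) := S.image (fun p => p.1.1) with hF
    have hFE : F ⊆ E := by
      intro f hf
      obtain ⟨p, _, rfl⟩ := Finset.mem_image.mp hf
      exact p.1.2
    have hBU : S.biUnion t = F.biUnion id := by
      ext a
      simp only [Finset.mem_biUnion, hF, Finset.mem_image]
      constructor
      · rintro ⟨p, hp, hap⟩
        exact ⟨p.1.1, ⟨p, hp, rfl⟩, hap⟩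
      · rintro ⟨f, ⟨p, hp, rfl⟩, haf⟩
        exact ⟨p, hp, haf⟩
    have hScard : S.card ≤ F.card * (s - 1) := by
      have hinj : Set.InjOn (fun p : {e // e ∈ E} × Fin (s - 1) => (p.1.1, p.2)) S := by
        intro p _ q _ hpq
        obtain ⟨h1, h2⟩ := Prod.mk.injEq _ _ _ _ ▸ hpq
        exact Prod.ext (Subtype.ext h1) h2
      have := Finset.card_image_of_injOn hinj
      have hsub : S.image (fun p : {e // e ∈ E} × Fin (s - 1) => (p.1.1, p.2))
          ⊆ F ×ˢ (Finset.univ : Finset (Fin (s - 1))) := by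
        intro q hq
        obtain ⟨p, hp, rfl⟩ := Finset.mem_image.mp hq
        exact Finset.mem_product.mpr ⟨Finset.mem_image.mpr ⟨p, hp, rfl⟩, Finset.mem_univ _⟩
      have hle := Finset.card_le_card hsub
      rw [this] at hle
      simpa [Finset.card_product] using hle
    calc S.card ≤ F.card * (s - 1) := hScard
      _ = (s - 1) * F.card := Nat.mul_comm _ _
      _ ≤ (F.biUnion id).card := hhall F hFE
      _ = (S.biUnion t).card := by rw [hBU]
  obtain ⟨f, hfinj, hft⟩ := (Finset.all_card_le_biUnion_card_iff_exists_injective t).mp hHallCond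
  set g : {e // e ∈ E} → Finset α :=
    fun e => (Finset.univ : Finset (Fin (s - 1))).image (fun i => f (e, i)) with hg
  have hgsub : ∀ e : {e // e ∈ E}, g e ⊆ e.1 := by
    intro e a ha
    obtain ⟨i, _, rfl⟩ := Finset.mem_image.mp ha
    exact hft (e, i)
  have hgcard : ∀ e : {e // e ∈ E}, (g e).card = s - 1 := by
    intro e
    rw [hg]
    rw [Finset.card_image_of_injective _ (fun i j hij => by
      have := hfinj hij
      exact (Prod.mk.injEq _ _ _ _ ▸ this).2)]
    simp
  refine ⟨E.attach.image g, ?_, ?_, ?_⟩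
  · intro fs hfs
    obtain ⟨e, _, rfl⟩ := Finset.mem_image.mp hfs
    exact ⟨(hgsub e).trans (hE e.1 e.2).1, hgcard e⟩
  · intro f1 hf1 f2 hf2 hne
    obtain ⟨e1, _, rfl⟩ := Finset.mem_image.mp hf1
    obtain ⟨e2, _, rfl⟩ := Finset.mem_image.mp hf2
    rw [Finset.disjoint_left]
    intro a ha1 ha2
    obtain ⟨i, _, hi⟩ := Finset.mem_image.mp ha1
    obtain ⟨j, _, hj⟩ := Finset.mem_image.mp ha2
    have : (e1, i) = (e2, j) := hfinj (hi.trans hj.symm)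
    have he12 : e1 = e2 := (Prod.mk.injEq _ _ _ _ ▸ this).1
    exact hne (by rw [he12])
  · intro e he
    exact ⟨g ⟨e, he⟩, Finset.mem_image.mpr ⟨⟨e, he⟩, E.mem_attach _, rfl⟩, hgsub ⟨e, he⟩⟩
end

section
/- In the bipartite flow network G with source v_source, sink v_sink, a node for each edge e of H and each vertex v of H, arcs (v_source, e) of capacity s-1, arcs (e,v) of capacity 1 whenever v ∈ e, and arcs (v, v_sink) of capacity 1: if every subset Ẽ of edges of H satisfies |⋃_{e∈Ẽ} e| ≥ (s-1)|Ẽ|, then the minimum cut (equivalently, maximum flow) value of G equals (s-1)|E(H)|. -/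
/-- In the flow network associated to a finite `s`-uniform hypergraph `H = (Vs, E)`
(source → each edge-node with capacity `s-1`, edge-node `e` → vertex-node `v` with
capacity `1` whenever `v ∈ e`, vertex-node → sink with capacity `1`), a cut with
source side `{v_source} ∪ Ẽ ∪ Ṽ` has value
`(s-1)(|E| - |Ẽ|) + |Ṽ| + Σ_{e ∈ Ẽ} |e \ Ṽ|`.  If every subset `Ẽ ⊆ E`
satisfies `|⋃_{e∈Ẽ} e| ≥ (s-1)|Ẽ|`, then the minimum cut value (equivalently,
by max-flow min-cut, the maximum flow value) equals `(s-1)|E|`. -/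
theorem stmt5 {α : Type*} [DecidableEq α] (s : ℕ)
    (Vs : Finset α) (E : Finset (Finset α))
    (hE : ∀ e ∈ E, e ⊆ Vs ∧ e.card = s)
    (hall : ∀ E' ⊆ E, (s - 1) * E'.card ≤ (E'.biUnion id).card) :
    IsLeast
      {c : ℕ | ∃ Et ⊆ E, ∃ Vt ⊆ Vs,
        c = (s - 1) * (E.card - Et.card) + Vt.card + ∑ e ∈ Et, (e \ Vt).card}
      ((s - 1) * E.card) := by
  constructor
  · exact ⟨∅, Finset.empty_subset _, ∅, Finset.empty_subset _, by simp⟩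
  · rintro c ⟨Et, hEt, Vt, hVt, rfl⟩
    have hcard : Et.card ≤ E.card := Finset.card_le_card hEt
    have key : (s - 1) * Et.card ≤ Vt.card + ∑ e ∈ Et, (e \ Vt).card := by
      calc (s - 1) * Et.card ≤ (Et.biUnion id).card := hall Et hEt
        _ = ((Et.biUnion id) ∩ Vt).card + ((Et.biUnion id) \ Vt).card :=
            (Finset.card_inter_add_card_sdiff _ _).symm
        _ ≤ Vt.card + ∑ e ∈ Et, (e \ Vt).card := by
            have h1 : ((Et.biUnion id) ∩ Vt).card ≤ Vt.card :=
              Finset.card_le_card Finset.inter_subset_right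
            have h2 : ((Et.biUnion id) \ Vt).card ≤ ∑ e ∈ Et, (e \ Vt).card := by
              have heq : (Et.biUnion id) \ Vt = Et.biUnion (fun e => e \ Vt) := by
                ext x; simp [Finset.mem_sdiff]; tauto
              rw [heq]; exact Finset.card_biUnion_le
            omega
    have hsplit : (s - 1) * E.card = (s - 1) * (E.card - Et.card) + (s - 1) * Et.card := by
      rw [← Nat.mul_add, Nat.sub_add_cancel hcard]
    omega
end

section
/- Fix constants m, b, s with m = s - 1. If the board consists of m pairwise disjoint d-stars with d = ⌈(b+1)/m⌉, plus the games proceed with Maker claiming m vertices and Breaker b vertices per turn, then Maker (moving first) has a winning strategy: Maker first claims the m centres, leaving at least b+1 pairwise disjoint edges each with s-1 = m unclaimed vertices; Breaker cannot touch all of them, so Maker completes an untouched edge on his second move. -/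
/-- A strategy maps the current position (Maker's claimed set, Breaker's claimed
set) to the set of vertices to be claimed next. -/
abbrev Strategy (V : Type*) := Finset V → Finset V → Finset V

/-- A strategy for a player claiming `k` vertices per turn is valid if each move
consists of unclaimed vertices and has cardinality `k` (or all the remaining
unclaimed vertices if fewer than `k` remain). -/
def ValidStrategy {V : Type*} [Fintype V] [DecidableEq V] (k : ℕ) (f : Strategy V) : Prop :=
  ∀ M B : Finset V, Disjoint (f M B) (M ∪ B) ∧
    (f M B).card = min k (Fintype.card V - (M ∪ B).card)

/-- The position after `r` rounds of the game, Maker moving first in each round: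
`(Maker's claimed set, Breaker's claimed set)`. -/
def play {V : Type*} [DecidableEq V] (ms bs : Strategy V) : ℕ → Finset V × Finset V
  | 0 => (∅, ∅)
  | r + 1 =>
    let q := play ms bs r
    let M' := q.1 ∪ ms q.1 q.2
    (M', q.2 ∪ bs M' q.2)

/-- Maker wins the `(m, b)`-game on the board `E`: Maker has a valid strategy such
that against every valid Breaker strategy, at the end of the game Maker's claimed
set contains an edge of `E`. -/
def MakerWins {V : Type*} [Fintype V] [DecidableEq V] (m b : ℕ)
    (E : Finset (Finset V)) : Prop :=
  ∃ ms : Strategy V, ValidStrategy m ms ∧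
    ∀ bs : Strategy V, ValidStrategy b bs →
      ∃ e ∈ E, e ⊆ (play ms bs (Fintype.card V)).1

/-- Breaker wins the `(m, b)`-game on the board `E`: Breaker has a valid strategy
such that against every valid Maker strategy, Maker's final claimed set contains
no edge of `E`. -/
def BreakerWins {V : Type*} [Fintype V] [DecidableEq V] (m b : ℕ)
    (E : Finset (Finset V)) : Prop :=
  ∃ bs : Strategy V, ValidStrategy b bs ∧
    ∀ ms : Strategy V, ValidStrategy m ms →
      ∀ e ∈ E, ¬ e ⊆ (play ms bs (Fintype.card V)).1

open Finset

lemma Finset.exists_subset_card_eq_min_superset {α : Type*} (U t : Finset α) (k : ℕ) :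
    ∃ u ⊆ U, #u = min k #U ∧ (t ⊆ U → #t ≤ k → t ⊆ u) := by
  by_cases ht : t ⊆ U ∧ #t ≤ k
  · obtain ⟨u, htu, huU, hu⟩ :=
      exists_subsuperset_card_eq ht.1 (le_min ht.2 (card_le_card ht.1)) (min_le_right _ _)
    exact ⟨u, huU, hu, fun _ _ => htu⟩
  · obtain ⟨u, huU, hu⟩ := exists_subset_card_eq (s := U) (min_le_right k #U)
    exact ⟨u, huU, hu, fun h₁ h₂ => absurd ⟨h₁, h₂⟩ ht⟩

lemma Finset.exists_disjoint_of_card_lt {ι α : Type*} [DecidableEq α] {s : Finset ι}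
    {f : ι → Finset α} (hf : (s : Set ι).PairwiseDisjoint f) {B : Finset α} (hB : #B < #s) :
    ∃ i ∈ s, Disjoint (f i) B := by
  by_contra! h
  have hmeet : ∀ i ∈ s, (f i ∩ B).Nonempty :=
    fun i hi => not_disjoint_iff_nonempty_inter.mp (h i hi)
  have hcover : s.biUnion (fun i => f i ∩ B) ⊆ B :=
    biUnion_subset.2 fun _ _ => inter_subset_right
  have := (card_le_card_biUnion (hf.mono fun _ => inter_subset_left) hmeet).trans
    (card_le_card hcover)
  omega

section Game

variable {V : Type*} [DecidableEq V]

lemma play_one (ms bs : Strategy V) : play ms bs 1 = (ms ∅ ∅, bs (ms ∅ ∅) ∅) := by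
  simp [play]

lemma play_succ_fst (ms bs : Strategy V) (r : ℕ) :
    (play ms bs (r + 1)).1 = (play ms bs r).1 ∪ ms (play ms bs r).1 (play ms bs r).2 :=
  rfl

lemma monotone_play_fst (ms bs : Strategy V) : Monotone fun r => (play ms bs r).1 :=
  monotone_nat_of_le_succ fun r => by rw [play_succ_fst]; exact subset_union_left

variable [Fintype V]

lemma exists_validStrategy_superset (k : ℕ) (t : Strategy V) :
    ∃ f : Strategy V, ValidStrategy k f ∧
      ∀ M B, t M B ⊆ (M ∪ B)ᶜ → #(t M B) ≤ k → t M B ⊆ f M B := by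
  choose f hfU hcard hf using fun M B => exists_subset_card_eq_min_superset (M ∪ B)ᶜ (t M B) k
  refine ⟨f, fun M B => ⟨disjoint_compl_left.mono_left (hfU M B), ?_⟩, hf⟩
  rw [hcard, card_compl]

/- Maker first claims `C` (plus arbitrary vertices); Breaker's `b` vertices then miss one of
the more than `b` disjoint sets `e \ C`, and Maker completes that edge in his second move. -/
theorem makerWins_of_pairwiseDisjoint_sdiff {m b : ℕ} (hm : 0 < m) (hV : 2 ≤ Fintype.card V)
    {E : Finset (Finset V)} {C : Finset V} (hC : #C ≤ m)
    (hE : (E : Set (Finset V)).PairwiseDisjoint (· \ C)) (hsize : ∀ e ∈ E, #(e \ C) ≤ m)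
    (hb : b < #E) : MakerWins m b E := by
  classical
  -- Maker's set is empty only before his first move, as `0 < m`
  let target : Strategy V := fun M B =>
    if M = ∅ then C
    else if h : ∃ e ∈ E, e \ M ⊆ (M ∪ B)ᶜ ∧ #(e \ M) ≤ m then h.choose \ M else ∅
  obtain ⟨ms, hms, hext⟩ := exists_validStrategy_superset m target
  refine ⟨ms, hms, fun bs hbs => ?_⟩
  set M₁ := ms ∅ ∅
  set B₁ := bs M₁ ∅
  have hCM₁ : C ⊆ M₁ := by
    simpa [target] using hext ∅ ∅ (by simp [target]) (by simpa [target] using hC)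
  have hM₁ : M₁ ≠ ∅ := by
    rw [← nonempty_iff_ne_empty, ← card_pos, (hms ∅ ∅).2]
    simp only [union_empty, card_empty, Nat.sub_zero]
    omega
  have hB₁ : #B₁ ≤ b := (hbs M₁ ∅).2 ▸ min_le_left _ _
  have hfree : ∃ e ∈ E, e \ M₁ ⊆ (M₁ ∪ B₁)ᶜ ∧ #(e \ M₁) ≤ m := by
    have hsub : ∀ e, e \ M₁ ⊆ e \ C := fun e => sdiff_le_sdiff_left hCM₁
    obtain ⟨e, he, hdisj⟩ := exists_disjoint_of_card_lt (hE.mono hsub) (hB₁.trans_lt hb)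
    refine ⟨e, he, subset_compl_iff_disjoint_right.2 ?_, (card_le_card (hsub e)).trans ?_⟩
    · exact disjoint_union_right.2 ⟨sdiff_disjoint, hdisj⟩
    · exact hsize e he
  obtain ⟨he, hefree, hecard⟩ := hfree.choose_spec
  have hwin : hfree.choose ⊆ (play ms bs 2).1 := by
    have htarget : target M₁ B₁ = hfree.choose \ M₁ := by
      simp only [target, if_neg hM₁, dif_pos hfree]
    have hmove := hext M₁ B₁ (htarget ▸ hefree) (htarget ▸ hecard)
    rw [htarget] at hmove
    rw [play_succ_fst, play_one]
    exact le_sup_sdiff.trans (union_subset_union_right hmove)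
  exact ⟨_, he, hwin.trans (monotone_play_fst ms bs hV)⟩

end Game

lemma Finset.pairwiseDisjoint_sdiff_of_inter_subset {α : Type*} [DecidableEq α]
    {E : Finset (Finset α)} {C : Finset α} (h : ∀ e ∈ E, ∀ e' ∈ E, e ≠ e' → e ∩ e' ⊆ C) :
    (E : Set (Finset α)).PairwiseDisjoint (· \ C) := by
  intro e he e' he' hne
  refine disjoint_left.2 fun v hv hv' => (mem_sdiff.1 hv).2 ?_
  exact h e he e' he' hne (mem_inter.2 ⟨(mem_sdiff.1 hv).1, (mem_sdiff.1 hv').1⟩)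

section Stars

variable {V ι : Type*} [DecidableEq V] [Fintype ι] {E : Finset (Finset V)}
  {S : ι → Finset (Finset V)} {c : ι → V}

lemma inter_subset_image_centre (hboard : ∀ e, e ∈ E ↔ ∃ i, e ∈ S i)
    (hstar : ∀ i, ∀ e ∈ S i, ∀ e' ∈ S i, e ≠ e' → e ∩ e' = {c i})
    (hdisj : Pairwise fun i j => Disjoint ((S i).biUnion id) ((S j).biUnion id))
    {e e' : Finset V} (he : e ∈ E) (he' : e' ∈ E) (hne : e ≠ e') :
    e ∩ e' ⊆ univ.image c := by
  obtain ⟨i, hei⟩ := (hboard e).1 he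
  obtain ⟨j, hej⟩ := (hboard e').1 he'
  by_cases hij : i = j
  · subst hij
    rw [hstar i e hei e' hej hne, singleton_subset_iff]
    exact mem_image_of_mem c (mem_univ i)
  · have : Disjoint e e' :=
      (hdisj hij).mono (subset_biUnion_of_mem id hei) (subset_biUnion_of_mem id hej)
    rw [disjoint_iff_inter_eq_empty.1 this]
    exact empty_subset _

lemma card_sdiff_image_centre_le {s : ℕ} (hboard : ∀ e, e ∈ E ↔ ∃ i, e ∈ S i)
    (hedge : ∀ i, ∀ e ∈ S i, #e = s ∧ c i ∈ e) {e : Finset V} (he : e ∈ E) :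
    #(e \ univ.image c) ≤ s - 1 := by
  obtain ⟨i, hei⟩ := (hboard e).1 he
  obtain ⟨hcard, hcentre⟩ := hedge i e hei
  calc #(e \ univ.image c) ≤ #(e.erase (c i)) := by
        rw [erase_eq]
        exact card_le_card (sdiff_le_sdiff_left
          (singleton_subset_iff.2 (mem_image_of_mem c (mem_univ i))))
    _ = s - 1 := by rw [card_erase_of_mem hcentre, hcard]

lemma card_eq_sum_card_stars (hboard : ∀ e, e ∈ E ↔ ∃ i, e ∈ S i)
    (hcentre : ∀ i, ∀ e ∈ S i, c i ∈ e)
    (hdisj : Pairwise fun i j => Disjoint ((S i).biUnion id) ((S j).biUnion id)) :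
    #E = ∑ i, #(S i) := by
  have hE : E = univ.biUnion S := by ext e; simp [hboard e]
  rw [hE, card_biUnion]
  intro i _ j _ hij
  exact disjoint_left.2 fun e hi hj => disjoint_left.1 (hdisj hij)
    (mem_biUnion.2 ⟨e, hi, hcentre i e hi⟩) (mem_biUnion.2 ⟨e, hj, hcentre i e hi⟩)

end Stars

lemma Nat.lt_mul_add_div {b m : ℕ} (hm : 0 < m) : b < m * ((b + m) / m) := by
  rw [Nat.add_div_right b hm]
  exact Nat.lt_mul_div_succ b hm

/-- If `m = s - 1 ≥ 1` and the board is the union of `m` pairwise vertex-disjoint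
`d`-stars with `d = ⌈(b+1)/m⌉` (each star consisting of `d` edges of size `s`,
any two of which intersect exactly in the common centre), then Maker (moving
first) has a winning strategy in the `(m, b)`-game. -/
theorem stmt7 {V : Type*} [Fintype V] [DecidableEq V] (m b s d : ℕ)
    (hm : 1 ≤ m) (hms : m = s - 1) (hs : 2 ≤ s) (hd : d = (b + m) / m)
    (E : Finset (Finset V))
    (S : Fin m → Finset (Finset V)) (c : Fin m → V)
    (hboard : ∀ e, e ∈ E ↔ ∃ i, e ∈ S i)
    (hcardS : ∀ i, (S i).card = d)
    (hedge : ∀ i, ∀ e ∈ S i, e.card = s ∧ c i ∈ e)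
    (hstar : ∀ i, ∀ e ∈ S i, ∀ e' ∈ S i, e ≠ e' → e ∩ e' = {c i})
    (hdisj : ∀ i j, i ≠ j → Disjoint ((S i).biUnion id) ((S j).biUnion id)) :
    MakerWins m b E := by
  have hC : #(univ.image c) ≤ m := card_image_le.trans (by simp)
  have hE : b < #E := by
    rw [card_eq_sum_card_stars hboard (fun i e he => (hedge i e he).2) fun i j => hdisj i j]
    simpa [hcardS, hd] using Nat.lt_mul_add_div hm
  obtain ⟨e, he⟩ := card_pos.1 (b.zero_le.trans_lt hE)
  obtain ⟨i, hei⟩ := (hboard e).1 he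
  have hV : 2 ≤ Fintype.card V := hs.trans ((hedge i e hei).1 ▸ card_le_univ e)
  refine makerWins_of_pairwiseDisjoint_sdiff hm hV hC ?_ ?_ hE
  · exact pairwiseDisjoint_sdiff_of_inter_subset fun e he e' he' =>
      inter_subset_image_centre hboard hstar (fun i j => hdisj i j) he he'
  · exact fun e he => hms ▸ card_sdiff_image_centre_le hboard hedge he
end

section
/- If m ≤ s - 2 and m ≤ b, then Breaker has a winning strategy for the (m,b)-game on any s-uniform hypergraph that is a disjoint collection of trees and unicycles. -/
/-!
A tree or unicycle component has excess at most `0`. Adding to a family of edges one more edge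
that meets the vertices it covers does not lower the excess, so every nonempty family of edges
inside a component has excess at most that of the component; summing over components,
every family `S` of edges satisfies `(s - 1) |S| ≤ |⋃ S|`. By Hall's theorem each edge then
contains an `(s - 1)`-set, pairwise disjoint across edges. As `s - 1 > m`, Breaker wins by
pairing: whenever Maker enters one of these sets, Breaker claims a vertex of it. Maker enters at
most `m ≤ b` new sets per turn and cannot fill any of them in a single turn.
-/

open Finset Function

section Components

variable {α : Type*} {E : Finset (Finset α)} {x y z : α}

theorem SameEdge.symm (h : SameEdge E x y) : SameEdge E y x :=
  let ⟨e, he, hx, hy⟩ := h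
  ⟨e, he, hy, hx⟩

theorem Conn.symm (h : Conn E x y) : Conn E y x := by
  induction h with
  | refl => exact .refl
  | tail _ hbc ih => exact ih.head hbc.symm

theorem Conn.exists_edge_crossing [DecidableEq α] {W : Finset α} {u v : α} (h : Conn E u v)
    (hu : u ∈ W) (hv : v ∉ W) : ∃ e ∈ E, (e ∩ W).Nonempty ∧ ¬e ⊆ W := by
  induction h with
  | refl => exact absurd hu hv
  | @tail p q _ hpq ih =>
    by_cases hp : p ∈ W
    · obtain ⟨e, he, hpe, hqe⟩ := hpq
      exact ⟨e, he, ⟨p, mem_inter.2 ⟨hpe, hp⟩⟩, fun hsub => hv (hsub hqe)⟩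
    · exact ih hp

variable [Fintype α]

theorem mem_component_univ : y ∈ component univ E x ↔ Conn E x y := by
  simp [component]

theorem mem_compEdges_univ {e : Finset α} :
    e ∈ compEdges univ E x ↔ e ∈ E ∧ e ⊆ component univ E x := by
  simp [compEdges]

theorem mem_compEdges_of_conn {e : Finset α} (he : e ∈ E) (hxz : Conn E x z) (hz : z ∈ e) :
    e ∈ compEdges univ E x :=
  mem_compEdges_univ.2 ⟨he, fun _ hw => mem_component_univ.2 (hxz.tail ⟨e, he, hz, hw⟩)⟩

theorem conn_of_mem_compEdges {e : Finset α} (he : e ∈ compEdges univ E x) (hz : z ∈ e) :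
    Conn E x z :=
  mem_component_univ.1 ((mem_compEdges_univ.1 he).2 hz)

theorem component_eq_biUnion_compEdges [DecidableEq α] {e : Finset α} (he : e ∈ E)
    (hx : x ∈ e) : component univ E x = (compEdges univ E x).biUnion id := by
  refine Subset.antisymm (fun y hy => ?_)
    (biUnion_subset.2 fun f hf => (mem_compEdges_univ.1 hf).2)
  rcases (mem_component_univ.1 hy).cases_tail with rfl | ⟨c, hc, f, hf, hcf, hyf⟩
  · exact mem_biUnion.2 ⟨e, mem_compEdges_of_conn he .refl hx, hx⟩
  · exact mem_biUnion.2 ⟨f, mem_compEdges_of_conn hf hc hcf, hyf⟩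

end Components

section Excess

variable {α : Type*} [DecidableEq α] {s : ℕ}

theorem excess_union {V V' : Finset α} {T T' : Finset (Finset α)} (hV : Disjoint V V')
    (hT : Disjoint T T') : excess s (V ∪ V') (T ∪ T') = excess s V T + excess s V' T' := by
  simp only [excess, card_union_of_disjoint hV, card_union_of_disjoint hT]
  push_cast
  ring

/-- Adding an edge that meets the vertices already covered costs at most `s - 1` new vertices. -/
theorem excess_biUnion_le_insert {T : Finset (Finset α)} {e : Finset α} (he : e.card = s)
    (heT : e ∉ T) (hmeet : (e ∩ T.biUnion id).Nonempty) :
    excess s (T.biUnion id) T ≤ excess s ((insert e T).biUnion id) (insert e T) := by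
  rw [biUnion_insert, id, excess, excess, card_insert_of_notMem heT]
  have hnew : ((e ∪ T.biUnion id).card : ℤ) + 1 ≤ (T.biUnion id).card + s := by
    have := card_union_add_card_inter e (T.biUnion id)
    have := card_pos.2 hmeet
    omega
  push_cast
  linarith

variable [Fintype α] {E : Finset (Finset α)} {x : α}

theorem exists_mem_compEdges_sdiff_meeting (hE : ∀ e ∈ E, e.Nonempty)
    {T : Finset (Finset α)} (hT : T ⊆ compEdges univ E x) (hTne : T.Nonempty)
    (hT' : T ≠ compEdges univ E x) :
    ∃ e ∈ compEdges univ E x \ T, (e ∩ T.biUnion id).Nonempty := by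
  set W := T.biUnion id
  have hTW : ∀ f ∈ T, f ⊆ W := fun f hf => subset_biUnion_of_mem id hf
  obtain ⟨f, hfC, hfT⟩ := exists_of_ssubset (ssubset_of_subset_of_ne hT hT')
  obtain ⟨e₁, he₁T⟩ := hTne
  obtain ⟨v₁, hv₁⟩ := hE e₁ (mem_compEdges_univ.1 (hT he₁T)).1
  by_cases hfW : f ⊆ W
  · obtain ⟨v, hv⟩ := hE f (mem_compEdges_univ.1 hfC).1
    exact ⟨f, mem_sdiff.2 ⟨hfC, hfT⟩, v, mem_inter.2 ⟨hv, hfW hv⟩⟩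
  obtain ⟨v₂, hv₂f, hv₂W⟩ := not_subset.1 hfW
  have hconn : Conn E v₁ v₂ :=
    (conn_of_mem_compEdges (hT he₁T) hv₁).symm.trans (conn_of_mem_compEdges hfC hv₂f)
  obtain ⟨e, he, ⟨a, ha⟩, heW⟩ := hconn.exists_edge_crossing (hTW e₁ he₁T hv₁) hv₂W
  obtain ⟨hae, haW⟩ := mem_inter.1 ha
  obtain ⟨g, hgT, hag⟩ := mem_biUnion.1 haW
  refine ⟨e, mem_sdiff.2 ⟨?_, fun heT => heW (hTW e heT)⟩, a, ha⟩
  exact mem_compEdges_of_conn he (conn_of_mem_compEdges (hT hgT) hag) hae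

theorem excess_biUnion_le_of_subset_compEdges (hE : ∀ e ∈ E, e.card = s) (hs : 0 < s)
    {T : Finset (Finset α)} (hT : T ⊆ compEdges univ E x) (hTne : T.Nonempty) :
    excess s (T.biUnion id) T ≤
      excess s ((compEdges univ E x).biUnion id) (compEdges univ E x) := by
  by_cases hTC : T = compEdges univ E x
  · rw [hTC]
  obtain ⟨e, heCT, hmeet⟩ := exists_mem_compEdges_sdiff_meeting
    (fun e he => card_pos.1 (hE e he ▸ hs)) hT hTne hTC
  obtain ⟨heC, heT⟩ := mem_sdiff.1 heCT
  exact (excess_biUnion_le_insert (hE e (mem_compEdges_univ.1 heC).1) heT hmeet).trans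
    (excess_biUnion_le_of_subset_compEdges hE hs (insert_subset heC hT) (insert_nonempty e T))
termination_by (compEdges univ E x \ T).card
decreasing_by
  rw [sdiff_insert, card_erase_of_mem heCT]
  exact Nat.pred_lt (card_pos.2 ⟨e, heCT⟩).ne'

theorem excess_biUnion_nonpos (hE : ∀ e ∈ E, e.card = s) (hs : 0 < s)
    (hcomp : ∀ x, excess s (component univ E x) (compEdges univ E x) ≤ 0)
    {S : Finset (Finset α)} (hS : S ⊆ E) : excess s (S.biUnion id) S ≤ 0 := by
  rcases S.eq_empty_or_nonempty with rfl | ⟨e, heS⟩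
  · simp [excess]
  obtain ⟨x, hx⟩ := card_pos.1 (hE e (hS heS) ▸ hs)
  set C := compEdges univ E x
  set T := S.filter (· ∈ C)
  set R := S.filter (· ∉ C)
  have hTC : T ⊆ C := fun f hf => (mem_filter.1 hf).2
  have heC : e ∈ C := mem_compEdges_of_conn (hS heS) .refl hx
  have hR : R ⊂ S := filter_ssubset.2 ⟨e, heS, not_not.2 heC⟩
  have hdisj : Disjoint (T.biUnion id) (R.biUnion id) := by
    refine disjoint_left.2 fun z hzT hzR => ?_
    obtain ⟨f, hfT, hzf⟩ := mem_biUnion.1 hzT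
    obtain ⟨g, hgR, hzg⟩ := mem_biUnion.1 hzR
    obtain ⟨hgS, hgC⟩ := mem_filter.1 hgR
    exact hgC (mem_compEdges_of_conn (hS hgS) (conn_of_mem_compEdges (hTC hfT) hzf) hzg)
  have hsplit : excess s (S.biUnion id) S =
      excess s (T.biUnion id) T + excess s (R.biUnion id) R := by
    rw [← excess_union hdisj (disjoint_filter_filter_not S S _), ← union_biUnion,
      filter_union_filter_not_eq]
  have hT : excess s (T.biUnion id) T ≤ 0 := by
    have := excess_biUnion_le_of_subset_compEdges hE hs hTC ⟨e, mem_filter.2 ⟨heS, heC⟩⟩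
    rw [← component_eq_biUnion_compEdges (hS heS) hx] at this
    exact this.trans (hcomp x)
  have hR' := excess_biUnion_nonpos hE hs hcomp (hR.subset.trans hS)
  omega
termination_by S.card
decreasing_by exact card_lt_card hR

theorem card_mul_le_card_biUnion_of_excess_nonpos (hE : ∀ e ∈ E, e.card = s) (hs : 0 < s)
    (hcomp : ∀ x, excess s (component univ E x) (compEdges univ E x) ≤ 0)
    {S : Finset (Finset α)} (hS : S ⊆ E) : (s - 1) * S.card ≤ (S.biUnion id).card := by
  have := excess_biUnion_nonpos hE hs hcomp hS
  rw [excess] at this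
  zify [hs]
  linarith

end Excess

/-- Hall's theorem applied to the family `(i, j) ↦ t i` indexed by `ι × Fin k`. -/
theorem exists_pairwise_disjoint_subsets_of_hall {ι α : Type*} [DecidableEq α]
    (t : ι → Finset α) (k : ℕ) (h : ∀ S : Finset ι, k * S.card ≤ (S.biUnion t).card) :
    ∃ D : ι → Finset α,
      (∀ i, D i ⊆ t i) ∧ (∀ i, (D i).card = k) ∧ Pairwise (Disjoint on D) := by
  classical
  have hall : ∀ S : Finset (ι × Fin k), S.card ≤ (S.biUnion fun p => t p.1).card := by
    intro S
    calc S.card ≤ (S.image Prod.fst ×ˢ (univ : Finset (Fin k))).card :=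
          card_le_card fun p hp => mem_product.2 ⟨mem_image_of_mem _ hp, mem_univ _⟩
      _ = k * (S.image Prod.fst).card := by rw [card_product, card_univ, Fintype.card_fin, mul_comm]
      _ ≤ ((S.image Prod.fst).biUnion t).card := h _
      _ = (S.biUnion fun p => t p.1).card := by rw [image_biUnion]
  obtain ⟨f, hf, hft⟩ := (all_card_le_biUnion_card_iff_exists_injective _).1 hall
  refine ⟨fun i => univ.image fun j => f (i, j), fun i => ?_, fun i => ?_, fun i i' hii' => ?_⟩
  · exact image_subset_iff.2 fun j _ => hft (i, j)
  · rw [card_image_of_injective _ fun j j' hjj' => congrArg Prod.snd (hf hjj'), card_univ,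
      Fintype.card_fin]
  · refine disjoint_left.2 fun v hv hv' => hii' ?_
    obtain ⟨j, -, rfl⟩ := mem_image.1 hv
    obtain ⟨j', -, hj'⟩ := mem_image.1 hv'
    exact (congrArg Prod.fst (hf hj')).symm

theorem exists_subset_biUnion_hitting {ι α : Type*} [DecidableEq α] (F : Finset ι)
    (t : ι → Finset α) :
    ∃ P ⊆ F.biUnion t, P.card ≤ F.card ∧
      ∀ i ∈ F, (t i).Nonempty → ¬Disjoint (t i) P := by
  classical
  induction F using Finset.induction_on with
  | empty => exact ⟨∅, by simp⟩
  | insert i F hi ih =>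
    obtain ⟨P, hP, hcard, hhit⟩ := ih
    rw [biUnion_insert, card_insert_of_notMem hi]
    rcases (t i).eq_empty_or_nonempty with hti | ⟨v, hv⟩
    · refine ⟨P, hP.trans subset_union_right, hcard.trans (Nat.le_succ _), fun j hj hne => ?_⟩
      rcases mem_insert.1 hj with rfl | hj
      · exact absurd hti hne.ne_empty
      · exact hhit j hj hne
    refine ⟨insert v P, insert_subset (mem_union_left _ hv) (hP.trans subset_union_right),
      (card_insert_le _ _).trans (by omega), fun j hj hne => ?_⟩
    rcases mem_insert.1 hj with rfl | hj
    · exact not_disjoint_iff.2 ⟨v, hv, mem_insert_self v P⟩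
    · exact fun hdisj => hhit j hj hne (hdisj.mono_right (subset_insert v P))

theorem exists_subset_card_eq_min {α : Type*} {P U : Finset α} (hPU : P ⊆ U) (k : ℕ) :
    ∃ T ⊆ U, T.card = min k U.card ∧ (P.card ≤ k → P ⊆ T) := by
  by_cases hP : P.card ≤ k
  · obtain ⟨T, hPT, hTU, hT⟩ :=
      exists_subsuperset_card_eq hPU (le_min hP (card_le_card hPU)) (min_le_right k U.card)
    exact ⟨T, hTU, hT, fun _ => hPT⟩
  · obtain ⟨T, hTU, hT⟩ := exists_subset_card_eq (min_le_right k U.card)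
    exact ⟨T, hTU, hT, fun h => absurd h hP⟩

section Pairing

variable {V ι : Type*} [DecidableEq V] [Fintype ι]

def threatened (D : ι → Finset V) (M B : Finset V) : Finset ι :=
  univ.filter fun i => ¬Disjoint (D i) M ∧ Disjoint (D i) B

def PairingInvariant (D : ι → Finset V) (M B : Finset V) : Prop :=
  Disjoint M B ∧ ∀ i, ¬Disjoint (D i) M → ¬Disjoint (D i) B

variable {D : ι → Finset V}

theorem PairingInvariant.inter_subset {M B A : Finset V} (hinv : PairingInvariant D M B) {i : ι}
    (hi : i ∈ threatened D (M ∪ A) B) : D i ∩ (M ∪ A ∪ B) ⊆ A := by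
  intro v hv
  obtain ⟨hvD, hv⟩ := mem_inter.1 hv
  obtain ⟨-, hiB⟩ := (mem_filter.1 hi).2
  rcases mem_union.1 hv with hv | hvB
  · refine (mem_union.1 hv).resolve_left fun hvM => hinv.2 i ?_ hiB
    exact not_disjoint_iff.2 ⟨v, hvD, hvM⟩
  · exact absurd hvB (disjoint_left.1 hiB hvD)

theorem PairingInvariant.card_threatened_le (hD : Pairwise (Disjoint on D)) {M B A : Finset V}
    (hinv : PairingInvariant D M B) : (threatened D (M ∪ A) B).card ≤ A.card :=
  calc (threatened D (M ∪ A) B).card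
      ≤ ((threatened D (M ∪ A) B).biUnion fun i => D i ∩ A).card := by
        refine card_le_card_biUnion (fun i _ j _ hij => (hD hij).mono inter_subset_left
          inter_subset_left) fun i hi => ?_
        obtain ⟨v, hvD, hvMA⟩ := not_disjoint_iff.1 (mem_filter.1 hi).2.1
        exact ⟨v, mem_inter.2 ⟨hvD, hinv.inter_subset hi
          (mem_inter.2 ⟨hvD, mem_union_left _ hvMA⟩)⟩⟩
    _ ≤ A.card := card_le_card (biUnion_subset.2 fun _ _ => inter_subset_right)

variable [Fintype V]

theorem exists_pairing_move (b : ℕ) (M B : Finset V) :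
    ∃ T ⊆ (M ∪ B)ᶜ, T.card = min b (Fintype.card V - (M ∪ B).card) ∧
      ((threatened D M B).card ≤ b → ∀ i ∈ threatened D M B,
        (D i \ (M ∪ B)).Nonempty → ¬Disjoint (D i) T) := by
  obtain ⟨P, hP, hPcard, hPhit⟩ :=
    exists_subset_biUnion_hitting (threatened D M B) fun i => D i \ (M ∪ B)
  have hPU : P ⊆ (M ∪ B)ᶜ :=
    hP.trans (biUnion_subset.2 fun i _ v hv => mem_compl.2 (mem_sdiff.1 hv).2)
  obtain ⟨T, hTU, hT, hPT⟩ := exists_subset_card_eq_min hPU b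
  refine ⟨T, hTU, by rw [hT, card_compl], fun hb i hi hfree hdisj => ?_⟩
  exact hPhit i hi hfree ((hdisj.mono_left sdiff_subset).mono_right (hPT (hPcard.trans hb)))

/-- Breaker claims a free vertex in every `D i` that Maker has just entered and he has not. -/
noncomputable def pairingStrategy (D : ι → Finset V) (b : ℕ) : Strategy V :=
  fun M B => (exists_pairing_move (D := D) b M B).choose

theorem pairingStrategy_valid (b : ℕ) : ValidStrategy b (pairingStrategy D b) := fun M B =>
  let ⟨hU, hcard, _⟩ := (exists_pairing_move b M B).choose_spec
  ⟨le_compl_iff_disjoint_right.1 hU, hcard⟩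

theorem not_disjoint_pairingStrategy {b : ℕ} {M B : Finset V} (hb : (threatened D M B).card ≤ b)
    {i : ι} (hi : i ∈ threatened D M B) (hfree : (D i \ (M ∪ B)).Nonempty) :
    ¬Disjoint (D i) (pairingStrategy D b M B) :=
  (exists_pairing_move b M B).choose_spec.2.2 hb i hi hfree

theorem PairingInvariant.step (hD : Pairwise (Disjoint on D)) {m b : ℕ}
    (hDm : ∀ i, m < (D i).card) (hmb : m ≤ b) {M B A : Finset V} (hinv : PairingInvariant D M B)
    (hA : Disjoint A (M ∪ B)) (hAm : A.card ≤ m) :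
    PairingInvariant D (M ∪ A) (B ∪ pairingStrategy D b (M ∪ A) B) := by
  set T := pairingStrategy D b (M ∪ A) B
  have hT : Disjoint T (M ∪ A ∪ B) := (pairingStrategy_valid b _ _).1
  refine ⟨?_, fun i hi => ?_⟩
  · simp only [disjoint_union_left, disjoint_union_right] at hA hT ⊢
    exact ⟨⟨hinv.1, hA.2⟩, hT.1.1.symm, hT.1.2.symm⟩
  rcases em' (Disjoint (D i) B) with hiB | hiB
  · exact fun h => hiB (h.mono_right subset_union_left)
  have hthr : i ∈ threatened D (M ∪ A) B := mem_filter.2 ⟨mem_univ i, hi, hiB⟩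
  have hfree : (D i \ (M ∪ A ∪ B)).Nonempty := by
    have := card_sdiff_add_card_inter (D i) (M ∪ A ∪ B)
    have := card_le_card (hinv.inter_subset hthr)
    have := hDm i
    rw [← card_pos]
    omega
  exact fun h => not_disjoint_pairingStrategy ((hinv.card_threatened_le hD).trans (hAm.trans hmb))
    hthr hfree (h.mono_right subset_union_right)

theorem pairingInvariant_play (hD : Pairwise (Disjoint on D)) {m b : ℕ}
    (hDm : ∀ i, m < (D i).card) (hmb : m ≤ b) {ms : Strategy V} (hms : ValidStrategy m ms)
    (r : ℕ) :
    PairingInvariant D (play ms (pairingStrategy D b) r).1 (play ms (pairingStrategy D b) r).2 := by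
  induction r with
  | zero => exact ⟨disjoint_empty_left _, fun i h => absurd (disjoint_empty_right _) h⟩
  | succ r ih =>
    obtain ⟨hA, hAcard⟩ := hms _ _
    exact ih.step hD hDm hmb hA (hAcard ▸ min_le_left _ _)

theorem breakerWins_of_pairwise_disjoint (hD : Pairwise (Disjoint on D)) {m b : ℕ}
    (hDm : ∀ i, m < (D i).card) (hmb : m ≤ b) {E : Finset (Finset V)}
    (hDE : ∀ e ∈ E, ∃ i, D i ⊆ e) : BreakerWins m b E := by
  refine ⟨pairingStrategy D b, pairingStrategy_valid b, fun ms hms e he heM => ?_⟩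
  obtain ⟨hMB, hhit⟩ := pairingInvariant_play hD hDm hmb hms (Fintype.card V)
  obtain ⟨i, hie⟩ := hDE e he
  have hDi : (D i).Nonempty := card_pos.1 (by have := hDm i; omega)
  refine hhit i (fun h => ?_) (hMB.mono_left (hie.trans heM))
  exact hDi.ne_empty (disjoint_self.1 (h.mono_right (hie.trans heM)))

end Pairing

/-- If `m ≤ s - 2` and `m ≤ b`, then Breaker wins the `(m,b)`-game on any
`s`-uniform board which is a disjoint collection of trees (connected components
of excess `-1`) and unicycles (connected components of excess `0`). -/
theorem stmt9 {V : Type*} [Fintype V] [DecidableEq V] (m b s : ℕ)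
    (hm : 1 ≤ m) (hms : m ≤ s - 2) (hmb : m ≤ b)
    (E : Finset (Finset V)) (hE : ∀ e ∈ E, e.card = s)
    (hcomp : ∀ x : V,
      excess s (component Finset.univ E x) (compEdges Finset.univ E x) = -1 ∨
      excess s (component Finset.univ E x) (compEdges Finset.univ E x) = 0) :
    BreakerWins m b E := by
  have hcomp' : ∀ x, excess s (component univ E x) (compEdges univ E x) ≤ 0 := fun x => by
    rcases hcomp x with h | h <;> omega
  have hall : ∀ S : Finset E, (s - 1) * S.card ≤ (S.biUnion Subtype.val).card := fun S => by
    have := card_mul_le_card_biUnion_of_excess_nonpos hE (by omega) hcomp'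
      (S := S.image Subtype.val) fun e he => by obtain ⟨e, -, rfl⟩ := mem_image.1 he; exact e.2
    rwa [image_biUnion, card_image_of_injective _ Subtype.val_injective] at this
  obtain ⟨D, hDe, hDcard, hD⟩ := exists_pairwise_disjoint_subsets_of_hall _ _ hall
  exact breakerWins_of_pairwise_disjoint hD (fun i => by rw [hDcard]; omega) hmb
    fun e he => ⟨⟨e, he⟩, hDe _⟩
end

section
/- Let t = ⌈αn⌉ for a constant 0 < α ≤ 1, and let p = c n^{1-s} for a constant c. The expected number of t-subsets of H_{n,s,p} containing no edge is at most ((e/α) · exp(-(c α^{s-1}/s!)(1-o(1))))^t; in particular, for c large enough (depending on α and s) this tends to 0 as n → ∞. -/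
/-!
By linearity of expectation the expected number of edge-free `t`-sets is
`C(n,t) (1-p)^{C(t,s)}`. Bound `C(n,t) ≤ (en/t)^t ≤ (e/α)^t` and `(1-p)^k ≤ exp(-pk)`; with
`p = c n^{1-s}` and `t = ⌈αn⌉` one has `p C(t,s) = t (c α^{s-1}/s!) (1 - ε)`, where
`1 - ε = ∏_{i<s-1} (t-1-i)/(αn) → 1`. Once `c α^{s-1}/s! ≥ 2(2 - log α)` and `ε ≤ 1/2`,
the base `(e/α) exp(-(c α^{s-1}/s!)(1-ε))` is at most `e⁻¹`, so the expectation tends to `0`.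
-/

open MeasureTheory Filter Asymptotics

/-- The Bernoulli measure on `Bool` with parameter `p` (a probability measure
whenever `0 ≤ p ≤ 1`). -/
noncomputable def bern (p : ℝ) : Measure Bool :=
  ENNReal.ofReal p • Measure.dirac true + ENNReal.ofReal (1 - p) • Measure.dirac false

instance (p : ℝ) : IsFiniteMeasure (bern p) := by
  constructor
  simp only [bern, Measure.add_apply, Measure.smul_apply, smul_eq_mul,
    measure_univ, mul_one]
  exact ENNReal.add_lt_top.mpr ⟨ENNReal.ofReal_lt_top, ENNReal.ofReal_lt_top⟩

/-- The index set of potential edges of an `s`-uniform hypergraph on `n`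
vertices: the `s`-element subsets of `Fin n`. -/
abbrev EdgeIdx (n s : ℕ) := {e : Finset (Fin n) // e.card = s}

/-- A sample point of the random hypergraph `H_{n,s,p}`: for each potential edge,
whether it is present. -/
abbrev HypOmega (n s : ℕ) := EdgeIdx n s → Bool

/-- The law of `H_{n,s,p}`: each of the `C(n,s)` potential edges is present
independently with probability `p`. -/
noncomputable def hypMeasure (n s : ℕ) (p : ℝ) : Measure (HypOmega n s) :=
  Measure.pi fun _ => bern p

open scoped Classical in
/-- The number of `t`-subsets of the vertices of the hypergraph `ω` containing no
edge. -/
noncomputable def edgeFreeCount (n s t : ℕ) (ω : HypOmega n s) : ℕ :=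
  ((Finset.univ : Finset (Finset (Fin n))).filter
    fun T => T.card = t ∧ ∀ e : EdgeIdx n s, e.1 ⊆ T → ω e = false).card

instance (n s : ℕ) (p : ℝ) : IsFiniteMeasure (hypMeasure n s p) := by
  unfold hypMeasure; infer_instance

lemma bern_singleton_false (p : ℝ) : bern p {false} = ENNReal.ofReal (1 - p) := by
  simp [bern]

lemma bern_univ {p : ℝ} (hp0 : 0 ≤ p) (hp1 : p ≤ 1) : bern p Set.univ = 1 := by
  simp only [bern, Measure.add_apply, Measure.smul_apply, smul_eq_mul, measure_univ, mul_one]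
  rw [← ENNReal.ofReal_add hp0 (by linarith), add_sub_cancel, ENNReal.ofReal_one]

def edgeFreeEvent (n s : ℕ) (T : Finset (Fin n)) : Set (HypOmega n s) :=
  {ω | ∀ e : EdgeIdx n s, e.1 ⊆ T → ω e = false}

lemma card_edgeIdx_subset (n s : ℕ) (T : Finset (Fin n)) :
    (Finset.univ.filter fun e : EdgeIdx n s => e.1 ⊆ T).card = T.card.choose s := by
  rw [← Finset.card_powersetCard]
  refine Finset.card_bij (fun e _ => e.1) (fun e he => ?_) (fun _ _ _ _ h => Subtype.ext h)
    (fun A hA => ?_)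
  · exact Finset.mem_powersetCard.2 ⟨(Finset.mem_filter.1 he).2, e.2⟩
  · rw [Finset.mem_powersetCard] at hA
    exact ⟨⟨A, hA.2⟩, by simpa using hA.1, rfl⟩

lemma hypMeasure_edgeFreeEvent (n s : ℕ) {p : ℝ} (hp0 : 0 ≤ p) (hp1 : p ≤ 1)
    (T : Finset (Fin n)) :
    hypMeasure n s p (edgeFreeEvent n s T) = ENNReal.ofReal (1 - p) ^ T.card.choose s := by
  classical
  have hpi : edgeFreeEvent n s T
      = Set.univ.pi fun e : EdgeIdx n s => if e.1 ⊆ T then {false} else Set.univ := by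
    ext ω
    simp only [edgeFreeEvent, Set.mem_ofPred_eq, Set.mem_pi, Set.mem_univ, true_imp_iff]
    refine forall_congr' fun e => ?_
    split_ifs <;> simp [*]
  rw [hpi, hypMeasure, Measure.pi_pi]
  simp only [apply_ite (bern p), bern_singleton_false, bern_univ hp0 hp1]
  rw [Finset.prod_ite, Finset.prod_const, Finset.prod_const, one_pow, mul_one,
    card_edgeIdx_subset]

lemma natCast_edgeFreeCount (n s t : ℕ) (ω : HypOmega n s) :
    (edgeFreeCount n s t ω : ℝ)
      = ∑ T ∈ Finset.univ.powersetCard t, (edgeFreeEvent n s T).indicator 1 ω := by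
  classical
  rw [edgeFreeCount, Finset.natCast_card_filter, Finset.powersetCard_eq_filter,
    Finset.sum_filter, Finset.powerset_univ]
  refine Finset.sum_congr rfl fun T _ => ?_
  by_cases hT : T.card = t <;> simp [hT, edgeFreeEvent, Set.indicator_apply]

theorem integral_edgeFreeCount (n s t : ℕ) {p : ℝ} (hp0 : 0 ≤ p) (hp1 : p ≤ 1) :
    ∫ ω, (edgeFreeCount n s t ω : ℝ) ∂hypMeasure n s p = n.choose t * (1 - p) ^ t.choose s := by
  simp_rw [natCast_edgeFreeCount]
  rw [integral_finsetSum _ fun _ _ => Integrable.of_finite]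
  have hT : ∀ T ∈ Finset.univ.powersetCard t,
      ∫ ω, (edgeFreeEvent n s T).indicator 1 ω ∂hypMeasure n s p = (1 - p) ^ t.choose s := by
    intro T hT
    rw [Finset.mem_powersetCard] at hT
    rw [integral_indicator_one MeasurableSet.of_discrete, measureReal_def,
      hypMeasure_edgeFreeEvent n s hp0 hp1, hT.2, ENNReal.toReal_pow,
      ENNReal.toReal_ofReal (by linarith)]
  rw [Finset.sum_congr rfl hT, Finset.sum_const, Finset.card_powersetCard, Finset.card_univ,
    Fintype.card_fin, nsmul_eq_mul]

lemma choose_le_exp_mul_div_pow (n t : ℕ) : (n.choose t : ℝ) ≤ (Real.exp 1 * n / t) ^ t := by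
  rcases t.eq_zero_or_pos with rfl | ht
  · simp
  have htt : (t : ℝ) ^ t / t.factorial ≤ Real.exp 1 ^ t := by
    rw [← Real.exp_nat_mul, mul_one]
    exact Real.pow_div_factorial_le_exp (x := t) t.cast_nonneg t
  have hfact : (0 : ℝ) < t.factorial := by positivity
  calc (n.choose t : ℝ) ≤ (n : ℝ) ^ t / t.factorial := Nat.choose_le_pow_div t n
    _ ≤ (n : ℝ) ^ t * Real.exp 1 ^ t / t ^ t := by
        rw [div_le_div_iff₀ hfact (by positivity)]
        rw [div_le_iff₀ hfact] at htt
        nlinarith [pow_nonneg (n.cast_nonneg : (0 : ℝ) ≤ n) t]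
    _ = (Real.exp 1 * n / t) ^ t := by rw [div_pow, mul_pow, mul_comm]

lemma choose_ceil_mul_le {α : ℝ} (hα : 0 < α) (n : ℕ) :
    (n.choose ⌈α * n⌉₊ : ℝ) ≤ (Real.exp 1 / α) ^ ⌈α * n⌉₊ := by
  refine (choose_le_exp_mul_div_pow n _).trans (pow_le_pow_left₀ (by positivity) ?_ _)
  rcases (⌈α * n⌉₊).eq_zero_or_pos with ht | ht
  · rw [ht, Nat.cast_zero, div_zero]; positivity
  rw [div_le_div_iff₀ (by positivity) hα, mul_assoc]
  gcongr
  rw [mul_comm]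
  exact Nat.le_ceil _

lemma one_sub_pow_le_exp_neg_mul {p : ℝ} (hp : p ≤ 1) (k : ℕ) :
    (1 - p) ^ k ≤ Real.exp (-(p * k)) := by
  rw [← neg_mul, mul_comm, Real.exp_nat_mul]
  exact pow_le_pow_left₀ (by linarith) (Real.one_sub_le_exp_neg p) k

/-- With `t = ⌈αn⌉`, `1 - chooseDefect α s n = s! C(t,s) / (t (αn)^(s-1))`; this is the
`1 - o(1)` in `C(t,s) = (1 - o(1)) t^s / s!`. -/
noncomputable def chooseDefect (α : ℝ) (s n : ℕ) : ℝ :=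
  1 - ∏ i ∈ Finset.range (s - 1), ((⌈α * n⌉₊ : ℝ) - (i + 1)) / (α * n)

lemma cast_descFactorial_eq_mul_prod (t : ℕ) {s : ℕ} (hs : 1 ≤ s) :
    (t.descFactorial s : ℝ) = t * ∏ i ∈ Finset.range (s - 1), ((t : ℝ) - (i + 1)) := by
  obtain ⟨k, rfl⟩ := Nat.exists_eq_add_of_le' hs
  rw [← descPochhammer_eval_eq_descFactorial ℝ, descPochhammer_eval_eq_prod_range,
    Finset.prod_range_succ', Nat.add_sub_cancel, mul_comm]
  push_cast
  ring_nf

lemma edgeProb_mul_choose_ceil_mul {s n : ℕ} (hs : 1 ≤ s) (hn : n ≠ 0) {α : ℝ} (hα : α ≠ 0)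
    (c : ℝ) :
    c * (n : ℝ) ^ ((1 : ℝ) - s) * (⌈α * n⌉₊.choose s : ℝ)
      = ⌈α * n⌉₊ * ((c * α ^ (s - 1) / s.factorial) * (1 - chooseDefect α s n)) := by
  have hchoose : (⌈α * n⌉₊.choose s : ℝ) * s.factorial
      = ⌈α * n⌉₊ * ∏ i ∈ Finset.range (s - 1), ((⌈α * n⌉₊ : ℝ) - (i + 1)) := by
    rw [← cast_descFactorial_eq_mul_prod _ hs, Nat.descFactorial_eq_factorial_mul_choose]
    push_cast; ring
  have hrpow : (n : ℝ) ^ ((1 : ℝ) - s) = ((n : ℝ) ^ (s - 1))⁻¹ := by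
    rw [← Real.rpow_natCast, ← Real.rpow_neg n.cast_nonneg, Nat.cast_sub hs]
    ring_nf
  have hn' : (n : ℝ) ≠ 0 := Nat.cast_ne_zero.2 hn
  rw [chooseDefect, sub_sub_cancel, Finset.prod_div_distrib, Finset.prod_const,
    Finset.card_range, hrpow, mul_pow]
  field_simp
  linear_combination c * hchoose

lemma tendsto_chooseDefect {α : ℝ} (hα : 0 < α) (s : ℕ) :
    Tendsto (chooseDefect α s) atTop (nhds 0) := by
  have hratio : Tendsto (fun n : ℕ => (⌈α * n⌉₊ : ℝ) / n / α) atTop (nhds 1) := by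
    simpa [hα.ne'] using ((tendsto_nat_ceil_mul_div_atTop hα.le).comp
      tendsto_natCast_atTop_atTop).div_const α
  have hfactor : ∀ i : ℕ, Tendsto (fun n : ℕ => ((⌈α * n⌉₊ : ℝ) - (i + 1)) / (α * n))
      atTop (nhds 1) := by
    intro i
    have := hratio.sub ((tendsto_inv_atTop_nhds_zero_nat (𝕜 := ℝ)).const_mul ((i + 1) / α))
    rw [mul_zero, sub_zero] at this
    exact this.congr fun n => by ring
  have := (tendsto_finsetProd (Finset.range (s - 1)) fun i _ => hfactor i).const_sub 1
  rw [Finset.prod_const_one, sub_self] at this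
  exact this

lemma integral_edgeFreeCount_ceil_mul_le {s n : ℕ} (hs : 1 ≤ s) (hn : n ≠ 0) {α c : ℝ}
    (hα : 0 < α) (hc : 0 ≤ c) (hp : c * (n : ℝ) ^ ((1 : ℝ) - s) ≤ 1) :
    ∫ ω, (edgeFreeCount n s ⌈α * n⌉₊ ω : ℝ) ∂hypMeasure n s (c * (n : ℝ) ^ ((1 : ℝ) - s))
      ≤ ((Real.exp 1 / α) *
          Real.exp (-(c * α ^ (s - 1) / s.factorial) * (1 - chooseDefect α s n))) ^ ⌈α * n⌉₊ := by
  have hp0 : 0 ≤ c * (n : ℝ) ^ ((1 : ℝ) - s) := by positivity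
  rw [integral_edgeFreeCount n s _ hp0 hp, mul_pow, ← Real.exp_nat_mul]
  refine mul_le_mul (choose_ceil_mul_le hα n) ?_ (by bound) (by positivity)
  refine (one_sub_pow_le_exp_neg_mul hp _).trans_eq ?_
  rw [edgeProb_mul_choose_ceil_mul hs hn hα.ne']
  ring_nf

lemma tendsto_natCast_rpow_one_sub {s : ℕ} (hs : 2 ≤ s) :
    Tendsto (fun n : ℕ => (n : ℝ) ^ ((1 : ℝ) - s)) atTop (nhds 0) := by
  have hs' : (0 : ℝ) < s - 1 := by
    have : (2 : ℝ) ≤ s := by exact_mod_cast hs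
    linarith
  exact ((tendsto_rpow_neg_atTop hs').comp tendsto_natCast_atTop_atTop).congr fun n => by
    rw [Function.comp_apply, neg_sub]

theorem eventually_integral_edgeFreeCount_le {s : ℕ} (hs : 2 ≤ s) {α c : ℝ} (hα : 0 < α)
    (hc : 0 ≤ c) :
    ∀ᶠ n : ℕ in atTop,
      ∫ ω, (edgeFreeCount n s ⌈α * n⌉₊ ω : ℝ) ∂hypMeasure n s (c * (n : ℝ) ^ ((1 : ℝ) - s))
        ≤ ((Real.exp 1 / α) *
          Real.exp (-(c * α ^ (s - 1) / s.factorial) * (1 - chooseDefect α s n))) ^ ⌈α * n⌉₊ := by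
  have hp : ∀ᶠ n : ℕ in atTop, c * (n : ℝ) ^ ((1 : ℝ) - s) ≤ 1 := by
    have := (tendsto_natCast_rpow_one_sub hs).const_mul c
    rw [mul_zero] at this
    exact this.eventually (eventually_le_nhds one_pos)
  filter_upwards [hp, eventually_ne_atTop 0] with n hpn hn
  exact integral_edgeFreeCount_ceil_mul_le (by omega) hn hα hc hpn

theorem tendsto_integral_edgeFreeCount {s : ℕ} (hs : 2 ≤ s) {α c : ℝ} (hα0 : 0 < α)
    (hα1 : α ≤ 1) (hc : 2 * (2 - Real.log α) * s.factorial / α ^ (s - 1) ≤ c) :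
    Tendsto (fun n : ℕ => ∫ ω, (edgeFreeCount n s ⌈α * n⌉₊ ω : ℝ)
      ∂hypMeasure n s (c * (n : ℝ) ^ ((1 : ℝ) - s))) atTop (nhds 0) := by
  have hlog : Real.log α ≤ 0 := Real.log_nonpos hα0.le hα1
  have hK : 2 * (2 - Real.log α) ≤ c * α ^ (s - 1) / s.factorial := by
    rwa [le_div_iff₀ (by positivity), ← div_le_iff₀ (by positivity)]
  have hc0 : 0 ≤ c := by
    refine le_trans ?_ hc
    have : 0 < 2 - Real.log α := by linarith
    positivity
  have hceil : Tendsto (fun n : ℕ => ⌈α * n⌉₊) atTop atTop :=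
    tendsto_nat_ceil_atTop.comp (tendsto_natCast_atTop_atTop.const_mul_atTop hα0)
  have hhalf : ∀ᶠ n : ℕ in atTop, chooseDefect α s n ≤ 1 / 2 :=
    (tendsto_chooseDefect hα0 s).eventually (eventually_le_nhds (by norm_num))
  refine squeeze_zero' (.of_forall fun n => integral_nonneg fun ω => Nat.cast_nonneg _) ?_
    ((tendsto_pow_atTop_nhds_zero_of_lt_one (Real.exp_pos (-1)).le
      (Real.exp_lt_one_iff.2 (by norm_num))).comp hceil)
  filter_upwards [eventually_integral_edgeFreeCount_le hs hα0 hc0, hhalf] with n hn hεn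
  refine hn.trans (pow_le_pow_left₀ (by positivity) ?_ _)
  have hdiv : Real.exp 1 / α = Real.exp (1 - Real.log α) := by
    rw [Real.exp_sub, Real.exp_log hα0]
  rw [hdiv, ← Real.exp_add, Real.exp_le_exp]
  nlinarith [mul_le_mul_of_nonneg_left hεn (hK.trans' (by linarith) : (0 : ℝ) ≤ _)]

/-- With `t = ⌈αn⌉` (`0 < α ≤ 1` constant) and `p = c·n^{1-s}`, the expected
number of edge-free `t`-subsets of `H_{n,s,p}` is at most
`((e/α)·exp(-(c α^{s-1}/s!)(1-o(1))))^t`; in particular, for `c` large enough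
(depending on `α` and `s`) it tends to `0` as `n → ∞`. -/
theorem stmt16 (s : ℕ) (hs : 2 ≤ s) (α : ℝ) (hα0 : 0 < α) (hα1 : α ≤ 1) :
    (∀ c : ℝ, 0 ≤ c → ∃ ε : ℕ → ℝ, Filter.Tendsto ε Filter.atTop (nhds 0) ∧
      ∀ᶠ n in Filter.atTop,
        (∫ ω, (edgeFreeCount n s ⌈α * n⌉₊ ω : ℝ)
            ∂ hypMeasure n s (c * (n : ℝ) ^ ((1 : ℝ) - (s : ℝ)))) ≤
          ((Real.exp 1 / α) *
            Real.exp (-(c * α ^ (s - 1) / (Nat.factorial s)) * (1 - ε n))) ^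
            ⌈α * n⌉₊) ∧
    (∃ c₀ : ℝ, ∀ c : ℝ, c₀ ≤ c →
      Filter.Tendsto
        (fun n : ℕ => ∫ ω, (edgeFreeCount n s ⌈α * n⌉₊ ω : ℝ)
          ∂ hypMeasure n s (c * (n : ℝ) ^ ((1 : ℝ) - (s : ℝ))))
        Filter.atTop (nhds 0)) :=
  ⟨fun _ hc => ⟨chooseDefect α s, tendsto_chooseDefect hα0 s,
      eventually_integral_edgeFreeCount_le hs hα0 hc⟩,
    ⟨_, fun _ hc => tendsto_integral_edgeFreeCount hs hα0 hα1 hc⟩⟩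
end
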